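/- Fix h ∈ ℝ with κ(h) > 0, M ≥ 0, f ∈ C(M), and set δ = min{1/8, 1/(8|h|), 1/(8M)} and β(f) = f''(1). Define U₁(u) = κ(h)f(u) + (2h/3)uf'(u) + u²f''(u) and U₂(u) = 2κ(h)uf(u) + (h/3 − 1)u²f'(u) + (2u² + u³)·f'(u)/(u−1) − u³f''(u), with f'(u)/(u−1) extended continuously at u = 1 by f''(1). Then: (i) U₁(u) ≥ κ(h) + β(f)/4 for all u ∈ U(δ); (ii) the functions V₁(u) = (2U₁(u) − U₂(u))/U₁(u) and V₂(u) = (κ(h) + β(f)) u / U₁(u) are well-defined and C¹ on U(δ), with V₁(1) = 0, V₂(1) = 1, and V₂(u) > 0 on U(δ); (iii) there exists a constant C₀ depending only on h and M such that |Vᵢ(u)| ≤ C₀ and |Vᵢ'(u)| ≤ C₀ for all u ∈ U(δ) and i = 1,2. -/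

import Mathlib

open Set

noncomputable section

/-- `κ(h) = (h/3)(h/3 − 1)`. -/
def kap (h : ℝ) : ℝ := (h / 3) * (h / 3 - 1)

/-- The interval `U(1/8) = [7/8, 9/8]`. -/
def Iset : Set ℝ := Set.Icc (7/8 : ℝ) (9/8)

/-- The interval `U(a) = {u : |u − 1| ≤ a}`. -/
def Uset (a : ℝ) : Set ℝ := Set.Icc (1 - a) (1 + a)

/-- First derivative of `f` on `U(1/8)`. -/
noncomputable def d1 (f : ℝ → ℝ) : ℝ → ℝ := derivWithin f Iset

/-- Second derivative of `f` on `U(1/8)`. -/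
noncomputable def d2 (f : ℝ → ℝ) : ℝ → ℝ := derivWithin (d1 f) Iset

/-- Third derivative of `f` on `U(1/8)`. -/
noncomputable def d3 (f : ℝ → ℝ) : ℝ → ℝ := derivWithin (d2 f) Iset

/-- The class `C(M)`: `f` is C³ on `U(1/8)`, `f(1) = 1`, `f'(1) = 0`, `f''(1) > 0`,
and `|f'''| ≤ M f''(1)` on `U(1/8)`. -/
def CM (M : ℝ) (f : ℝ → ℝ) : Prop :=
  ContDiffOn ℝ 3 f Iset ∧ f 1 = 1 ∧ d1 f 1 = 0 ∧ 0 < d2 f 1 ∧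
    ∀ u ∈ Iset, |d3 f u| ≤ M * d2 f 1

/-- `δ = min{1/8, 1/(8|h|), 1/(8M)}`, where for `M = 0` the term `1/(8M)` is
interpreted as `+∞`. -/
noncomputable def del (h M : ℝ) : ℝ :=
  if M = 0 then min (1/8) (1 / (8 * |h|))
  else min (1/8) (min (1 / (8 * |h|)) (1 / (8 * M)))

/-- The quotient `f'(u)/(u−1)`, extended continuously at `u = 1` by `f''(1)`. -/
noncomputable def Qf (f : ℝ → ℝ) (u : ℝ) : ℝ :=
  if u = 1 then d2 f 1 else d1 f u / (u - 1)

/-- `U₁(u) = κ(h)f(u) + (2h/3)uf'(u) + u²f''(u)`. -/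
noncomputable def U1 (h : ℝ) (f : ℝ → ℝ) (u : ℝ) : ℝ :=
  kap h * f u + (2 * h / 3) * u * d1 f u + u ^ 2 * d2 f u

/-- `U₂(u) = 2κ(h)uf(u) + (h/3 − 1)u²f'(u) + (2u² + u³)f'(u)/(u−1) − u³f''(u)`. -/
noncomputable def U2 (h : ℝ) (f : ℝ → ℝ) (u : ℝ) : ℝ :=
  2 * kap h * u * f u + (h / 3 - 1) * u ^ 2 * d1 f u
    + (2 * u ^ 2 + u ^ 3) * Qf f u - u ^ 3 * d2 f u

/-- `V₁(u) = (2U₁(u) − U₂(u))/U₁(u)`. -/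
noncomputable def V1 (h : ℝ) (f : ℝ → ℝ) (u : ℝ) : ℝ :=
  (2 * U1 h f u - U2 h f u) / U1 h f u

/-- `V₂(u) = (κ(h) + β(f)) u / U₁(u)`. -/
noncomputable def V2 (h : ℝ) (f : ℝ → ℝ) (u : ℝ) : ℝ :=
  (kap h + d2 f 1) * u / U1 h f u

open Filter Topology

/-!
The radius `δ` is chosen so that every Taylor remainder of `f` at `1` is a small multiple of
`β = f''(1)`: `|f'''| ≤ Mβ` and `Mδ ≤ 1/8` keep `f''` within `β/8` of `β`, so `f' = O(βδ)` and
`f - 1 = O(βδ²)`. With `|h|δ ≤ 1/8` and `κδ² ≤ 1/144` the first two terms of `U₁` are then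
perturbations of `κ` of size `O(β)`, while `u²f''(u) ≥ (7/8)³β`; hence `U₁ ≥ κ + β/4`.

The quotient `f'(u)/(u-1)` is `dslope f' 1`. Cauchy's mean value theorem against `(u-1)²` writes
its derivative away from `1` as `f'''(c)/2`, and its difference quotient at `1` as half a
difference quotient of `f''`; so it is `C¹` with derivative bounded by `Mβ/2`.

Every ingredient of `U₁`, `U₂` and of their derivatives is therefore bounded by a constant
depending on `h, M` times `κ + β`, while `U₁ ≥ (κ + β)/4`, so the quotients `V₁, V₂` and their
derivatives are bounded independently of `f`.
-/

lemma exists_mem_uIoo_ratio_eq {f f' g g' : ℝ → ℝ} {s : Set ℝ} {a b : ℝ} (hab : a ≠ b)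
    (hs : uIcc a b ⊆ s) (hf : ∀ x ∈ s, HasDerivWithinAt f (f' x) s x)
    (hg : ∀ x ∈ s, HasDerivWithinAt g (g' x) s x) :
    ∃ c ∈ uIoo a b, (g b - g a) * f' c = (f b - f a) * g' c := by
  wlog hlt : a < b generalizing a b
  · obtain ⟨c, hc, hfg⟩ := this hab.symm (uIcc_comm a b ▸ hs) (hab.lt_or_gt.resolve_left hlt)
    exact ⟨c, uIoo_comm a b ▸ hc, by linarith⟩
  rw [uIcc_of_lt hlt] at hs
  have hnhds : ∀ x ∈ Ioo a b, s ∈ 𝓝 x := fun x hx =>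
    mem_of_superset (isOpen_Ioo.mem_nhds hx) (Ioo_subset_Icc_self.trans hs)
  rw [uIoo_of_lt hlt]
  exact exists_ratio_hasDerivAt_eq_ratio_slope f f' hlt
    (fun x hx => (hf x (hs hx)).continuousWithinAt.mono hs)
    (fun x hx => (hf x (hs (Ioo_subset_Icc_self hx))).hasDerivAt (hnhds x hx)) g g'
    (fun x hx => (hg x (hs hx)).continuousWithinAt.mono hs)
    (fun x hx => (hg x (hs (Ioo_subset_Icc_self hx))).hasDerivAt (hnhds x hx))

lemma tendsto_of_eventually_exists_mem_uIoo {F φ : ℝ → ℝ} {a L : ℝ}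
    (hφ : Tendsto φ (𝓝[≠] a) (𝓝 L)) (hF : ∀ᶠ x in 𝓝[≠] a, ∃ c ∈ uIoo a x, F x = φ c) :
    Tendsto F (𝓝[≠] a) (𝓝 L) := by
  rw [Metric.tendsto_nhdsWithin_nhds] at hφ ⊢
  obtain ⟨ν₀, hν₀, hF⟩ := Metric.mem_nhdsWithin_iff.1 hF
  intro ε hε
  obtain ⟨ν, hν, hφν⟩ := hφ ε hε
  refine ⟨min ν ν₀, lt_min hν hν₀, fun x hx hxa => ?_⟩
  obtain ⟨c, hc, hFc⟩ := hF ⟨Metric.mem_ball.2 (hxa.trans_le (min_le_right _ _)), hx⟩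
  have hca : dist c a ≤ dist x a := by
    simpa only [dist_comm a] using Real.dist_left_le_of_mem_uIcc (uIoo_subset_uIcc_self hc)
  rw [hFc]
  exact hφν (ne_of_mem_of_not_mem hc left_notMem_uIoo)
    (hca.trans_lt (hxa.trans_le (min_le_left _ _)))

lemma hasDerivWithinAt_sub_sq (s : Set ℝ) (a x : ℝ) :
    HasDerivWithinAt (fun y => (y - a) ^ 2) (2 * (x - a)) s x :=
  (((hasDerivWithinAt_id x s).sub_const a).fun_pow 2).congr_deriv (by simp)

section DSlope

variable {g g' g'' : ℝ → ℝ} {s : Set ℝ} {a x : ℝ}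

def dslopeDeriv (g g' g'' : ℝ → ℝ) (a x : ℝ) : ℝ :=
  if x = a then g'' a / 2 else ((x - a) * g' x - (g x - g a)) / (x - a) ^ 2

lemma exists_mem_uIoo_dslope_eq (hx : x ≠ a) (hs : uIcc a x ⊆ s)
    (hg : ∀ y ∈ s, HasDerivWithinAt g (g' y) s y) :
    ∃ c ∈ uIoo a x, dslope g a x = g' c := by
  obtain ⟨c, hc, hgc⟩ :=
    exists_mem_uIoo_ratio_eq hx.symm hs hg fun y _ => hasDerivWithinAt_id y s
  refine ⟨c, hc, ?_⟩
  rw [dslope_of_ne _ hx, slope_def_field, div_eq_iff (sub_ne_zero.2 hx)]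
  simpa [mul_comm] using hgc.symm

lemma exists_mem_uIoo_dslopeDeriv_eq (hx : x ≠ a) (hs : uIcc a x ⊆ s)
    (hg : ∀ y ∈ s, HasDerivWithinAt g (g' y) s y)
    (hg' : ∀ y ∈ s, HasDerivWithinAt g' (g'' y) s y) :
    ∃ c ∈ uIoo a x, dslopeDeriv g g' g'' a x = g'' c / 2 := by
  have hF : ∀ y ∈ s, HasDerivWithinAt (fun y => (y - a) * g' y - (g y - g a))
      ((y - a) * g'' y) s y := fun y hy =>
    (((hasDerivWithinAt_id y s).sub_const a).mul (hg' y hy)).sub ((hg y hy).sub_const _)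
      |>.congr_deriv (by simp)
  obtain ⟨c, hc, hFc⟩ :=
    exists_mem_uIoo_ratio_eq hx.symm hs hF fun y _ => hasDerivWithinAt_sub_sq s a y
  have hca : c - a ≠ 0 := sub_ne_zero.2 (ne_of_mem_of_not_mem hc left_notMem_uIoo)
  refine ⟨c, hc, ?_⟩
  rw [dslopeDeriv, if_neg hx, div_eq_iff (pow_ne_zero 2 (sub_ne_zero.2 hx))]
  refine mul_left_cancel₀ hca ?_
  linear_combination -hFc / 2

lemma dslope_same_of_hasDerivWithinAt {b : ℝ} (hsa : s ∈ 𝓝 a) (hg : HasDerivWithinAt g b s a) :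
    dslope g a a = b := by
  rw [dslope_same, (hg.hasDerivAt hsa).deriv]

lemma exists_mem_uIoo_slope_dslope_eq (hx : x ≠ a) (hs : uIcc a x ⊆ s) (hsa : s ∈ 𝓝 a)
    (hg : ∀ y ∈ s, HasDerivWithinAt g (g' y) s y) :
    ∃ c ∈ uIoo a x, slope (dslope g a) a x = slope g' a c / 2 := by
  have hN : ∀ y ∈ s, HasDerivWithinAt (fun y => g y - g a - g' a * (y - a))
      (g' y - g' a) s y := fun y hy =>
    ((hg y hy).sub_const _).sub (((hasDerivWithinAt_id y s).sub_const a).const_mul _)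
      |>.congr_deriv (by simp)
  obtain ⟨c, hc, hNc⟩ :=
    exists_mem_uIoo_ratio_eq hx.symm hs hN fun y _ => hasDerivWithinAt_sub_sq s a y
  have hca : c - a ≠ 0 := sub_ne_zero.2 (ne_of_mem_of_not_mem hc left_notMem_uIoo)
  have hxa : x - a ≠ 0 := sub_ne_zero.2 hx
  refine ⟨c, hc, ?_⟩
  rw [slope_def_field, slope_def_field, dslope_of_ne _ hx, slope_def_field,
    dslope_same_of_hasDerivWithinAt hsa (hg a (mem_of_mem_nhds hsa))]
  field_simp
  linear_combination -hNc

lemma hasDerivAt_dslope_same (hs : s.OrdConnected) (hsa : s ∈ 𝓝 a)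
    (hg : ∀ y ∈ s, HasDerivWithinAt g (g' y) s y)
    (hg' : ∀ y ∈ s, HasDerivWithinAt g' (g'' y) s y) :
    HasDerivAt (dslope g a) (g'' a / 2) a := by
  have hg'a : HasDerivAt g' (g'' a) a := (hg' a (mem_of_mem_nhds hsa)).hasDerivAt hsa
  rw [hasDerivAt_iff_tendsto_slope]
  refine tendsto_of_eventually_exists_mem_uIoo
    ((hasDerivAt_iff_tendsto_slope.1 hg'a).div_const 2) ?_
  filter_upwards [mem_nhdsWithin_of_mem_nhds hsa, self_mem_nhdsWithin] with x hxs hxa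
  exact exists_mem_uIoo_slope_dslope_eq hxa (hs.uIcc_subset (mem_of_mem_nhds hsa) hxs) hsa hg

lemma hasDerivWithinAt_dslope (hs : s.OrdConnected) (hsa : s ∈ 𝓝 a)
    (hg : ∀ y ∈ s, HasDerivWithinAt g (g' y) s y)
    (hg' : ∀ y ∈ s, HasDerivWithinAt g' (g'' y) s y) (hx : x ∈ s) :
    HasDerivWithinAt (dslope g a) (dslopeDeriv g g' g'' a x) s x := by
  rcases eq_or_ne x a with rfl | hxa
  · rw [dslopeDeriv, if_pos rfl]
    exact (hasDerivAt_dslope_same hs hsa hg hg').hasDerivWithinAt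
  · have hq : HasDerivWithinAt (slope g a) (dslopeDeriv g g' g'' a x) s x := by
      rw [slope_fun_def_field, dslopeDeriv, if_neg hxa]
      exact (((hg x hx).sub_const (g a)).fun_div ((hasDerivWithinAt_id x s).sub_const a)
        (sub_ne_zero.2 hxa)).congr_deriv (by simp only [id]; ring)
    exact hq.congr_of_eventuallyEq
      ((dslope_eventuallyEq_slope_of_ne g hxa).filter_mono nhdsWithin_le_nhds)
      (dslope_of_ne g hxa)

lemma continuousOn_dslopeDeriv (hs : s.OrdConnected) (hsa : s ∈ 𝓝 a)
    (hg : ∀ y ∈ s, HasDerivWithinAt g (g' y) s y)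
    (hg' : ∀ y ∈ s, HasDerivWithinAt g' (g'' y) s y) (hg'' : ContinuousOn g'' s) :
    ContinuousOn (dslopeDeriv g g' g'' a) s := by
  intro x hx
  rcases eq_or_ne x a with rfl | hxa
  · refine (continuousWithinAt_compl_self.1 ?_).continuousWithinAt
    rw [ContinuousWithinAt, dslopeDeriv, if_pos rfl]
    refine tendsto_of_eventually_exists_mem_uIoo
      ((((hg'' x hx).continuousAt hsa).tendsto.mono_left nhdsWithin_le_nhds).div_const 2) ?_
    filter_upwards [mem_nhdsWithin_of_mem_nhds hsa, self_mem_nhdsWithin] with y hys hyx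
    exact exists_mem_uIoo_dslopeDeriv_eq hyx (hs.uIcc_subset hx hys) hg hg'
  · have hq : ContinuousWithinAt (fun y => ((y - a) * g' y - (g y - g a)) / (y - a) ^ 2) s x :=
      (((continuousWithinAt_id.sub continuousWithinAt_const).mul
        (hg' x hx).continuousWithinAt).sub
        ((hg x hx).continuousWithinAt.sub continuousWithinAt_const)).div
        ((continuousWithinAt_id.sub continuousWithinAt_const).pow 2)
        (pow_ne_zero 2 (sub_ne_zero.2 hxa))
    refine hq.congr_of_eventuallyEq ?_ (if_neg hxa)
    filter_upwards [nhdsWithin_le_nhds (isOpen_ne.mem_nhds hxa)] with y hy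
    exact if_neg hy

lemma contDiffOn_dslope (hs : s.OrdConnected) (hsa : s ∈ 𝓝 a) (hsu : UniqueDiffOn ℝ s)
    (hg : ∀ y ∈ s, HasDerivWithinAt g (g' y) s y)
    (hg' : ∀ y ∈ s, HasDerivWithinAt g' (g'' y) s y) (hg'' : ContinuousOn g'' s) :
    ContDiffOn ℝ 1 (dslope g a) s :=
  (contDiffOn_one_iff_derivWithin hsu).2
    ⟨fun _ hx => (hasDerivWithinAt_dslope hs hsa hg hg' hx).differentiableWithinAt,
      (continuousOn_dslopeDeriv hs hsa hg hg' hg'').congr fun _ hx =>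
        (hasDerivWithinAt_dslope hs hsa hg hg' hx).derivWithin (hsu _ hx)⟩

lemma abs_dslopeDeriv_le {B : ℝ} (hs : s.OrdConnected) (ha : a ∈ s) (hx : x ∈ s)
    (hg : ∀ y ∈ s, HasDerivWithinAt g (g' y) s y)
    (hg' : ∀ y ∈ s, HasDerivWithinAt g' (g'' y) s y) (hB : ∀ y ∈ s, |g'' y| ≤ B) :
    |dslopeDeriv g g' g'' a x| ≤ B / 2 := by
  rcases eq_or_ne x a with rfl | hxa
  · rw [dslopeDeriv, if_pos rfl, abs_div, abs_two]
    gcongr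
    exact hB x hx
  · obtain ⟨c, hc, hcx⟩ := exists_mem_uIoo_dslopeDeriv_eq hxa (hs.uIcc_subset ha hx) hg hg'
    rw [hcx, abs_div, abs_two]
    gcongr
    exact hB c (hs.uIcc_subset ha hx (uIoo_subset_uIcc_self hc))

end DSlope

section QuotientBounds

variable {n d n' d' σ K G : ℝ}

lemma abs_div_le_of_le (hσ : 0 < σ) (hG : 0 ≤ G) (hd : σ ≤ G * d) (hn : |n| ≤ K * σ) :
    |n / d| ≤ K * G := by
  have hd0 : 0 < d := pos_of_mul_pos_right (hσ.trans_le hd) hG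
  have hK : 0 ≤ K := nonneg_of_mul_nonneg_left ((abs_nonneg n).trans hn) hσ
  rw [abs_div, abs_of_pos hd0, div_le_iff₀ hd0]
  nlinarith [mul_le_mul_of_nonneg_left hd hK]

lemma abs_quotient_deriv_le (hσ : 0 < σ) (hG : 0 ≤ G) (hd : σ ≤ G * d) (hn : |n| ≤ K * σ)
    (hn' : |n'| ≤ K * σ) (hd' : |d'| ≤ K * σ) :
    |(n' * d - n * d') / d ^ 2| ≤ K * G + (K * G) ^ 2 := by
  have hd0 : d ≠ 0 := (pos_of_mul_pos_right (hσ.trans_le hd) hG).ne'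
  have hKG : 0 ≤ K * G := (abs_nonneg _).trans (abs_div_le_of_le hσ hG hd hn)
  calc |(n' * d - n * d') / d ^ 2| = |n' / d - n / d * (d' / d)| := by
        congr 1; field_simp
    _ ≤ K * G + K * G * (K * G) :=
        norm_sub_le_of_le (E := ℝ) (abs_div_le_of_le hσ hG hd hn')
          (norm_mul_le_of_le (abs_div_le_of_le hσ hG hd hn) (abs_div_le_of_le hσ hG hd hd'))
    _ = K * G + (K * G) ^ 2 := by ring

end QuotientBounds

lemma ne_zero_of_kap_pos {h : ℝ} (hκ : 0 < kap h) : h ≠ 0 := by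
  rintro rfl
  norm_num [kap] at hκ

section Radius

variable {h M : ℝ}

lemma del_pos (hκ : 0 < kap h) (hM : 0 ≤ M) : 0 < del h M := by
  have hh : 0 < |h| := abs_pos.2 (ne_zero_of_kap_pos hκ)
  unfold del
  split_ifs with hM0
  · positivity
  · have : 0 < M := hM.lt_of_ne' hM0
    positivity

lemma del_le_eighth : del h M ≤ 1 / 8 := by
  unfold del
  split_ifs <;> exact min_le_left _ _

lemma abs_mul_del_le : |h| * del h M ≤ 1 / 8 := by
  have hle : del h M ≤ 1 / (8 * |h|) := by
    unfold del
    split_ifs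
    · exact min_le_right _ _
    · exact (min_le_right _ _).trans (min_le_left _ _)
  rcases (abs_nonneg h).eq_or_lt with h0 | h0
  · rw [← h0, zero_mul]; norm_num
  · calc |h| * del h M ≤ |h| * (1 / (8 * |h|)) := by gcongr
      _ = 1 / 8 := by field_simp

lemma mul_del_le (hM : 0 ≤ M) : M * del h M ≤ 1 / 8 := by
  rcases hM.eq_or_lt with rfl | hM0
  · norm_num
  · have hle : del h M ≤ 1 / (8 * M) := by
      rw [del, if_neg hM0.ne']
      exact (min_le_right _ _).trans (min_le_right _ _)
    calc M * del h M ≤ M * (1 / (8 * M)) := by gcongr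
      _ = 1 / 8 := by field_simp

lemma kap_mul_sq_le {δ : ℝ} (hδ : 0 ≤ δ) (hδ8 : δ ≤ 1 / 8) (hhδ : |h| * δ ≤ 1 / 8) :
    kap h * δ ^ 2 ≤ 1 / 144 := by
  have h1 : (h * δ) ^ 2 ≤ 1 / 64 := by
    rw [← sq_abs, abs_mul, abs_of_nonneg hδ]
    nlinarith [mul_nonneg (abs_nonneg h) hδ]
  have h2 : -(h * δ) * δ ≤ 1 / 64 := by
    nlinarith [mul_le_mul_of_nonneg_right (neg_le_abs h) (sq_nonneg δ),
      mul_le_mul_of_nonneg_right hhδ hδ]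
  unfold kap
  nlinarith

end Radius

section Intervals

variable {δ u : ℝ}

lemma uniqueDiffOn_Iset : UniqueDiffOn ℝ Iset := uniqueDiffOn_Icc (by norm_num)

lemma Iset_mem_nhds_one : Iset ∈ 𝓝 (1 : ℝ) := Icc_mem_nhds (by norm_num) (by norm_num)

lemma Uset_subset_Iset (hδ : δ ≤ 1 / 8) : Uset δ ⊆ Iset :=
  Icc_subset_Icc (by linarith) (by linarith)

lemma convex_Uset (δ : ℝ) : Convex ℝ (Uset δ) := convex_Icc _ _

lemma one_mem_Uset_of_mem (hu : u ∈ Uset δ) : 1 ∈ Uset δ :=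
  ⟨by linarith [hu.1, hu.2], by linarith [hu.1, hu.2]⟩

lemma abs_sub_one_le_of_mem_Uset (hu : u ∈ Uset δ) : |u - 1| ≤ δ :=
  abs_sub_le_iff.2 ⟨by linarith [hu.2], by linarith [hu.1]⟩

end Intervals

namespace CM

variable {M δ u : ℝ} {f : ℝ → ℝ} {s : Set ℝ}

lemma apply_one (hf : CM M f) : f 1 = 1 := hf.2.1

lemma d1_one (hf : CM M f) : d1 f 1 = 0 := hf.2.2.1

lemma d2_one_pos (hf : CM M f) : 0 < d2 f 1 := hf.2.2.2.1

lemma abs_d3_le (hf : CM M f) (hu : u ∈ Iset) : |d3 f u| ≤ M * d2 f 1 := hf.2.2.2.2 u hu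

lemma contDiffOn_d1 (hf : CM M f) : ContDiffOn ℝ 2 (d1 f) Iset :=
  hf.1.derivWithin uniqueDiffOn_Iset (by norm_num)

lemma contDiffOn_d2 (hf : CM M f) : ContDiffOn ℝ 1 (d2 f) Iset :=
  hf.contDiffOn_d1.derivWithin uniqueDiffOn_Iset (by norm_num)

lemma continuousOn_d3 (hf : CM M f) : ContinuousOn (d3 f) Iset :=
  hf.contDiffOn_d2.continuousOn_derivWithin uniqueDiffOn_Iset le_rfl

lemma hasDerivWithinAt (hf : CM M f) (hs : s ⊆ Iset) (hu : u ∈ s) :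
    HasDerivWithinAt f (d1 f u) s u :=
  ((hf.1.differentiableOn (by norm_num) u (hs hu)).hasDerivWithinAt).mono hs

lemma hasDerivWithinAt_d1 (hf : CM M f) (hs : s ⊆ Iset) (hu : u ∈ s) :
    HasDerivWithinAt (d1 f) (d2 f u) s u :=
  ((hf.contDiffOn_d1.differentiableOn (by norm_num) u (hs hu)).hasDerivWithinAt).mono hs

lemma hasDerivWithinAt_d2 (hf : CM M f) (hs : s ⊆ Iset) (hu : u ∈ s) :
    HasDerivWithinAt (d2 f) (d3 f u) s u :=
  ((hf.contDiffOn_d2.differentiableOn one_ne_zero u (hs hu)).hasDerivWithinAt).mono hs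

lemma Qf_eq_dslope (hf : CM M f) : Qf f = dslope (d1 f) 1 := by
  funext u
  rcases eq_or_ne u 1 with rfl | hu
  · rw [Qf, if_pos rfl,
      dslope_same_of_hasDerivWithinAt Iset_mem_nhds_one
        (hf.hasDerivWithinAt_d1 subset_rfl (by norm_num [Iset]))]
  · rw [Qf, if_neg hu, dslope_of_ne _ hu, slope_def_field, hf.d1_one, sub_zero]

lemma hasDerivWithinAt_Qf (hf : CM M f) (hu : u ∈ Iset) :
    HasDerivWithinAt (Qf f) (dslopeDeriv (d1 f) (d2 f) (d3 f) 1 u) Iset u := by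
  rw [hf.Qf_eq_dslope]
  exact hasDerivWithinAt_dslope ordConnected_Icc Iset_mem_nhds_one
    (fun _ hy => hf.hasDerivWithinAt_d1 subset_rfl hy)
    (fun _ hy => hf.hasDerivWithinAt_d2 subset_rfl hy) hu

lemma contDiffOn_Qf (hf : CM M f) : ContDiffOn ℝ 1 (Qf f) Iset := by
  rw [hf.Qf_eq_dslope]
  exact contDiffOn_dslope ordConnected_Icc Iset_mem_nhds_one uniqueDiffOn_Iset
    (fun _ hy => hf.hasDerivWithinAt_d1 subset_rfl hy)
    (fun _ hy => hf.hasDerivWithinAt_d2 subset_rfl hy) hf.continuousOn_d3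

lemma abs_dslopeDeriv_le (hf : CM M f) (hu : u ∈ Iset) :
    |dslopeDeriv (d1 f) (d2 f) (d3 f) 1 u| ≤ M * d2 f 1 / 2 :=
  _root_.abs_dslopeDeriv_le ordConnected_Icc (by norm_num [Iset]) hu
    (fun _ hy => hf.hasDerivWithinAt_d1 subset_rfl hy)
    (fun _ hy => hf.hasDerivWithinAt_d2 subset_rfl hy) fun _ hy => hf.abs_d3_le hy

lemma mul_d2_one_nonneg (hf : CM M f) : 0 ≤ M * d2 f 1 :=
  (abs_nonneg _).trans (hf.abs_d3_le (u := 1) (by norm_num [Iset]))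

lemma abs_d2_sub_le (hf : CM M f) (hδ : δ ≤ 1 / 8) (hMδ : M * δ ≤ 1 / 8) (hu : u ∈ Uset δ) :
    |d2 f u - d2 f 1| ≤ d2 f 1 / 8 := by
  have hU := Uset_subset_Iset hδ
  calc |d2 f u - d2 f 1| ≤ M * d2 f 1 * |u - 1| :=
        (convex_Uset δ).norm_image_sub_le_of_norm_hasDerivWithin_le
          (fun _ hy => hf.hasDerivWithinAt_d2 hU hy) (fun _ hy => hf.abs_d3_le (hU hy))
          (one_mem_Uset_of_mem hu) hu
    _ ≤ M * d2 f 1 * δ := by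
        gcongr
        · exact hf.mul_d2_one_nonneg
        · exact abs_sub_one_le_of_mem_Uset hu
    _ ≤ d2 f 1 / 8 := by nlinarith [hf.d2_one_pos]

lemma abs_d2_le (hf : CM M f) (hδ : δ ≤ 1 / 8) (hMδ : M * δ ≤ 1 / 8) (hu : u ∈ Uset δ) :
    |d2 f u| ≤ 9 * d2 f 1 / 8 := by
  have := abs_sub_abs_le_abs_sub (d2 f u) (d2 f 1)
  rw [abs_of_pos hf.d2_one_pos] at this
  linarith [hf.abs_d2_sub_le hδ hMδ hu]

lemma abs_d1_le (hf : CM M f) (hδ : δ ≤ 1 / 8) (hMδ : M * δ ≤ 1 / 8) (hu : u ∈ Uset δ) :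
    |d1 f u| ≤ 9 * d2 f 1 / 8 * δ := by
  have hmvt : |d1 f u - d1 f 1| ≤ 9 * d2 f 1 / 8 * |u - 1| :=
    (convex_Uset δ).norm_image_sub_le_of_norm_hasDerivWithin_le
      (fun _ hy => hf.hasDerivWithinAt_d1 (Uset_subset_Iset hδ) hy)
      (fun _ hy => hf.abs_d2_le hδ hMδ hy) (one_mem_Uset_of_mem hu) hu
  rw [hf.d1_one, sub_zero] at hmvt
  have := hf.d2_one_pos
  exact hmvt.trans (by gcongr; exact abs_sub_one_le_of_mem_Uset hu)

lemma abs_apply_sub_one_le (hf : CM M f) (hδ : δ ≤ 1 / 8) (hMδ : M * δ ≤ 1 / 8)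
    (hu : u ∈ Uset δ) : |f u - 1| ≤ 9 * d2 f 1 / 8 * δ ^ 2 := by
  have hmvt : |f u - f 1| ≤ 9 * d2 f 1 / 8 * δ * |u - 1| :=
    (convex_Uset δ).norm_image_sub_le_of_norm_hasDerivWithin_le
      (fun _ hy => hf.hasDerivWithinAt (Uset_subset_Iset hδ) hy)
      (fun _ hy => hf.abs_d1_le hδ hMδ hy) (one_mem_Uset_of_mem hu) hu
  rw [hf.apply_one] at hmvt
  have hδ0 : 0 ≤ δ := (abs_nonneg _).trans (abs_sub_one_le_of_mem_Uset hu)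
  calc |f u - 1| ≤ 9 * d2 f 1 / 8 * δ * |u - 1| := hmvt
    _ ≤ 9 * d2 f 1 / 8 * δ * δ := by
        have := hf.d2_one_pos
        gcongr
        exact abs_sub_one_le_of_mem_Uset hu
    _ = 9 * d2 f 1 / 8 * δ ^ 2 := by ring

lemma abs_Qf_sub_le (hf : CM M f) (hδ : δ ≤ 1 / 8) (hMδ : M * δ ≤ 1 / 8) (hu : u ∈ Uset δ) :
    |Qf f u - d2 f 1| ≤ d2 f 1 / 8 := by
  rcases eq_or_ne u 1 with rfl | hu1
  · rw [Qf, if_pos rfl, sub_self, abs_zero]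
    exact div_nonneg hf.d2_one_pos.le (by norm_num)
  · have h1 := one_mem_Uset_of_mem hu
    obtain ⟨c, hc, hQc⟩ := exists_mem_uIoo_dslope_eq hu1 (ordConnected_Icc.uIcc_subset h1 hu)
      fun _ hy => hf.hasDerivWithinAt_d1 (Uset_subset_Iset hδ) hy
    rw [hf.Qf_eq_dslope, hQc]
    exact hf.abs_d2_sub_le hδ hMδ (ordConnected_Icc.uIcc_subset h1 hu (uIoo_subset_uIcc_self hc))

lemma abs_le_of_mem_Uset (hf : CM M f) (hδ : δ ≤ 1 / 8) (hMδ : M * δ ≤ 1 / 8)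
    (hu : u ∈ Uset δ) :
    |u| ≤ 2 ∧ |f u| ≤ 1 + d2 f 1 ∧ |d1 f u| ≤ d2 f 1 ∧ |d2 f u| ≤ 2 * d2 f 1 ∧
      |d3 f u| ≤ M * d2 f 1 ∧ |Qf f u| ≤ 2 * d2 f 1 ∧
      |dslopeDeriv (d1 f) (d2 f) (d3 f) 1 u| ≤ M * d2 f 1 := by
  have hβ := hf.d2_one_pos
  have hδ0 : 0 ≤ δ := (abs_nonneg _).trans (abs_sub_one_le_of_mem_Uset hu)
  have huI := Uset_subset_Iset hδ hu
  refine ⟨?_, ?_, ?_, ?_, hf.abs_d3_le huI, ?_, ?_⟩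
  · rw [abs_of_nonneg (by linarith [huI.1])]
    linarith [huI.2]
  · have h1 := hf.abs_apply_sub_one_le hδ hMδ hu
    have h2 := abs_sub_abs_le_abs_sub (f u) 1
    rw [abs_one] at h2
    have h3 : δ ^ 2 ≤ 1 / 64 := by nlinarith
    nlinarith [mul_le_mul_of_nonneg_left h3 hβ.le]
  · nlinarith [hf.abs_d1_le hδ hMδ hu]
  · linarith [hf.abs_d2_le hδ hMδ hu]
  · have h1 := abs_sub_abs_le_abs_sub (Qf f u) (d2 f 1)
    rw [abs_of_pos hβ] at h1
    linarith [hf.abs_Qf_sub_le hδ hMδ hu]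
  · exact (hf.abs_dslopeDeriv_le huI).trans (half_le_self hf.mul_d2_one_nonneg)

end CM

section Coefficients

variable {h M δ u : ℝ} {f : ℝ → ℝ}

lemma hasDerivWithinAt_U1 (hf : CM M f) (hu : u ∈ Iset) :
    HasDerivWithinAt (U1 h f) (kap h * d1 f u + 2 * h / 3 * (d1 f u + u * d2 f u)
      + (2 * u * d2 f u + u ^ 2 * d3 f u)) Iset u := by
  have hid := hasDerivWithinAt_id u Iset
  exact (((hf.hasDerivWithinAt subset_rfl hu).const_mul (kap h)).add
    ((hid.const_mul (2 * h / 3)).mul (hf.hasDerivWithinAt_d1 subset_rfl hu))).add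
    ((hid.fun_pow 2).mul (hf.hasDerivWithinAt_d2 subset_rfl hu)) |>.congr_deriv (by simp; ring)

lemma hasDerivWithinAt_U2 (hf : CM M f) (hu : u ∈ Iset) :
    HasDerivWithinAt (U2 h f) (2 * kap h * (f u + u * d1 f u)
      + (h / 3 - 1) * (2 * u * d1 f u + u ^ 2 * d2 f u)
      + (4 * u + 3 * u ^ 2) * Qf f u + (2 * u ^ 2 + u ^ 3) * dslopeDeriv (d1 f) (d2 f) (d3 f) 1 u
      - (3 * u ^ 2 * d2 f u + u ^ 3 * d3 f u)) Iset u := by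
  have hid := hasDerivWithinAt_id u Iset
  exact (((((hid.const_mul (2 * kap h)).mul (hf.hasDerivWithinAt subset_rfl hu)).add
    (((hid.fun_pow 2).const_mul (h / 3 - 1)).mul (hf.hasDerivWithinAt_d1 subset_rfl hu))).add
    ((((hid.fun_pow 2).const_mul 2).add (hid.fun_pow 3)).mul (hf.hasDerivWithinAt_Qf hu))).sub
    ((hid.fun_pow 3).mul (hf.hasDerivWithinAt_d2 subset_rfl hu))) |>.congr_deriv (by simp; ring)

lemma contDiffOn_U1 (hf : CM M f) : ContDiffOn ℝ 1 (U1 h f) Iset :=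
  ((contDiffOn_const.mul (hf.1.of_le (by norm_num))).add
    ((contDiffOn_const.mul contDiffOn_id).mul (hf.contDiffOn_d1.of_le (by norm_num)))).add
    ((contDiffOn_id.pow 2).mul hf.contDiffOn_d2)

lemma contDiffOn_U2 (hf : CM M f) : ContDiffOn ℝ 1 (U2 h f) Iset :=
  ((((contDiffOn_const.mul contDiffOn_id).mul (hf.1.of_le (by norm_num))).add
    ((contDiffOn_const.mul (contDiffOn_id.pow 2)).mul (hf.contDiffOn_d1.of_le (by norm_num)))).add
    (((contDiffOn_const.mul (contDiffOn_id.pow 2)).add (contDiffOn_id.pow 3)).mul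
      hf.contDiffOn_Qf)).sub ((contDiffOn_id.pow 3).mul hf.contDiffOn_d2)

lemma U1_one (hf : CM M f) : U1 h f 1 = kap h + d2 f 1 := by
  rw [U1, hf.apply_one, hf.d1_one]; ring

lemma U2_one (hf : CM M f) : U2 h f 1 = 2 * (kap h + d2 f 1) := by
  rw [U2, hf.apply_one, hf.d1_one, Qf, if_pos rfl]; ring

lemma le_U1 (hf : CM M f) (hκ : 0 ≤ kap h) (hδ : δ ≤ 1 / 8) (hMδ : M * δ ≤ 1 / 8)
    (hhδ : |h| * δ ≤ 1 / 8) (hu : u ∈ Uset δ) : kap h + d2 f 1 / 4 ≤ U1 h f u := by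
  have hβ := hf.d2_one_pos
  have hδ0 : 0 ≤ δ := (abs_nonneg _).trans (abs_sub_one_le_of_mem_Uset hu)
  obtain ⟨hu7, hu9⟩ := Uset_subset_Iset hδ hu
  have hf0 : kap h - d2 f 1 / 128 ≤ kap h * f u := by
    have h1 := mul_le_mul_of_nonneg_left (abs_le.1 (hf.abs_apply_sub_one_le hδ hMδ hu)).1 hκ
    nlinarith [kap_mul_sq_le hδ0 hδ hhδ]
  have hf1 : |2 * h / 3 * u * d1 f u| ≤ 27 * d2 f 1 / 256 := by
    have h1 : |2 * h / 3 * u * d1 f u| ≤ 2 * |h| / 3 * (9 / 8) * (9 * d2 f 1 / 8 * δ) := by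
      rw [abs_mul, abs_mul, abs_div, abs_mul, abs_of_pos (by norm_num : (0 : ℝ) < 2),
        abs_of_pos (by norm_num : (0 : ℝ) < 3), abs_of_nonneg (by linarith : 0 ≤ u)]
      gcongr
      exact hf.abs_d1_le hδ hMδ hu
    nlinarith
  have hf2 : 343 * d2 f 1 / 512 ≤ u ^ 2 * d2 f u := by
    have h1 := (abs_le.1 (hf.abs_d2_sub_le hδ hMδ hu)).1
    have h2 : (7 / 8 : ℝ) ^ 2 ≤ u ^ 2 := by gcongr
    nlinarith
  rw [U1]
  linarith [neg_abs_le (2 * h / 3 * u * d1 f u)]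

end Coefficients

def coeffBound (h M : ℝ) : ℝ := 128 * (1 + kap h + |h| + M)

lemma one_le_coeffBound {h M : ℝ} (hκ : 0 ≤ kap h) (hM : 0 ≤ M) : 1 ≤ coeffBound h M := by
  rw [coeffBound]
  linarith [abs_nonneg h]

lemma abs_two_mul_div_three_le (h : ℝ) : |2 * h / 3| ≤ |h| := by
  rw [abs_div, abs_mul]
  norm_num
  linarith [abs_nonneg h]

lemma abs_div_three_sub_one_le (h : ℝ) : |h / 3 - 1| ≤ |h| + 1 := by
  refine (abs_sub _ _).trans ?_
  rw [abs_div, abs_one]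
  norm_num
  linarith [abs_nonneg h]

section CoefficientBounds

variable {h M δ u : ℝ} {f : ℝ → ℝ}

lemma abs_U1_le (hf : CM M f) (hκ : 0 ≤ kap h) (hM : 0 ≤ M) (hδ : δ ≤ 1 / 8)
    (hMδ : M * δ ≤ 1 / 8) (hu : u ∈ Uset δ) :
    |U1 h f u| ≤ coeffBound h M * (kap h + d2 f 1) := by
  obtain ⟨hu, hf0, hf1, hf2, -⟩ := hf.abs_le_of_mem_Uset hδ hMδ hu
  have hβ := hf.d2_one_pos
  have hu2 : |u ^ 2| ≤ 2 ^ 2 := by rw [abs_pow]; gcongr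
  have hU := norm_add_le_of_le (E := ℝ)
    (norm_add_le_of_le (norm_mul_le_of_le (abs_of_nonneg hκ).le hf0)
      (norm_mul_le_of_le (norm_mul_le_of_le (abs_two_mul_div_three_le h) hu) hf1))
    (norm_mul_le_of_le hu2 hf2)
  simp only [Real.norm_eq_abs] at hU
  rw [U1, coeffBound]
  nlinarith [mul_nonneg hκ hβ.le, mul_nonneg (abs_nonneg h) hβ.le, mul_nonneg hM hβ.le,
    mul_nonneg hκ hκ, mul_nonneg hκ (abs_nonneg h), mul_nonneg hκ hM]

lemma abs_U2_le (hf : CM M f) (hκ : 0 ≤ kap h) (hM : 0 ≤ M) (hδ : δ ≤ 1 / 8)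
    (hMδ : M * δ ≤ 1 / 8) (hu : u ∈ Uset δ) :
    |U2 h f u| ≤ coeffBound h M * (kap h + d2 f 1) := by
  obtain ⟨hu, hf0, hf1, hf2, -, hQ, -⟩ := hf.abs_le_of_mem_Uset hδ hMδ hu
  have hβ := hf.d2_one_pos
  have hu2 : |u ^ 2| ≤ 2 ^ 2 := by rw [abs_pow]; gcongr
  have hu3 : |u ^ 3| ≤ 2 ^ 3 := by rw [abs_pow]; gcongr
  have hκ2 : |2 * kap h| ≤ 2 * kap h := by rw [abs_mul, abs_two, abs_of_nonneg hκ]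
  have hU := norm_sub_le_of_le (E := ℝ) (norm_add_le_of_le (norm_add_le_of_le
    (norm_mul_le_of_le (norm_mul_le_of_le hκ2 hu) hf0)
    (norm_mul_le_of_le (norm_mul_le_of_le (abs_div_three_sub_one_le h) hu2) hf1))
    (norm_mul_le_of_le (norm_add_le_of_le (norm_mul_le_of_le abs_two.le hu2) hu3) hQ))
    (norm_mul_le_of_le hu3 hf2)
  simp only [Real.norm_eq_abs] at hU
  rw [U2, coeffBound]
  nlinarith [mul_nonneg hκ hβ.le, mul_nonneg (abs_nonneg h) hβ.le, mul_nonneg hM hβ.le,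
    mul_nonneg hκ hκ, mul_nonneg hκ (abs_nonneg h), mul_nonneg hκ hM]

lemma abs_derivWithin_U1_le (hf : CM M f) (hκ : 0 ≤ kap h) (hM : 0 ≤ M) (hδ : δ ≤ 1 / 8)
    (hMδ : M * δ ≤ 1 / 8) (hu : u ∈ Uset δ) :
    |derivWithin (U1 h f) Iset u| ≤ coeffBound h M * (kap h + d2 f 1) := by
  have huI := Uset_subset_Iset hδ hu
  obtain ⟨hu, -, hf1, hf2, hf3, -⟩ := hf.abs_le_of_mem_Uset hδ hMδ hu
  have hβ := hf.d2_one_pos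
  have hu2 : |u ^ 2| ≤ 2 ^ 2 := by rw [abs_pow]; gcongr
  have hDU := norm_add_le_of_le (E := ℝ) (norm_add_le_of_le
    (norm_mul_le_of_le (abs_of_nonneg hκ).le hf1)
    (norm_mul_le_of_le (abs_two_mul_div_three_le h)
      (norm_add_le_of_le hf1 (norm_mul_le_of_le hu hf2))))
    (norm_add_le_of_le (norm_mul_le_of_le (norm_mul_le_of_le abs_two.le hu) hf2)
      (norm_mul_le_of_le hu2 hf3))
  simp only [Real.norm_eq_abs] at hDU
  rw [(hasDerivWithinAt_U1 hf huI).derivWithin (uniqueDiffOn_Iset u huI), coeffBound]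
  nlinarith [mul_nonneg hκ hβ.le, mul_nonneg (abs_nonneg h) hβ.le, mul_nonneg hM hβ.le,
    mul_nonneg hκ hκ, mul_nonneg hκ (abs_nonneg h), mul_nonneg hκ hM]

lemma abs_derivWithin_U2_le (hf : CM M f) (hκ : 0 ≤ kap h) (hM : 0 ≤ M) (hδ : δ ≤ 1 / 8)
    (hMδ : M * δ ≤ 1 / 8) (hu : u ∈ Uset δ) :
    |derivWithin (U2 h f) Iset u| ≤ coeffBound h M * (kap h + d2 f 1) := by
  have huI := Uset_subset_Iset hδ hu
  obtain ⟨hu, hf0, hf1, hf2, hf3, hQ, hQ'⟩ := hf.abs_le_of_mem_Uset hδ hMδ hu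
  have hβ := hf.d2_one_pos
  have hu2 : |u ^ 2| ≤ 2 ^ 2 := by rw [abs_pow]; gcongr
  have hu3 : |u ^ 3| ≤ 2 ^ 3 := by rw [abs_pow]; gcongr
  have hκ2 : |2 * kap h| ≤ 2 * kap h := by rw [abs_mul, abs_two, abs_of_nonneg hκ]
  have h3 : |(3 : ℝ)| ≤ 3 := by norm_num
  have h4 : |(4 : ℝ)| ≤ 4 := by norm_num
  have hDU := norm_sub_le_of_le (E := ℝ) (norm_add_le_of_le (norm_add_le_of_le
    (norm_add_le_of_le (norm_mul_le_of_le hκ2 (norm_add_le_of_le hf0 (norm_mul_le_of_le hu hf1)))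
      (norm_mul_le_of_le (abs_div_three_sub_one_le h)
        (norm_add_le_of_le (norm_mul_le_of_le (norm_mul_le_of_le abs_two.le hu) hf1)
          (norm_mul_le_of_le hu2 hf2))))
    (norm_mul_le_of_le (norm_add_le_of_le (norm_mul_le_of_le h4 hu) (norm_mul_le_of_le h3 hu2)) hQ))
    (norm_mul_le_of_le (norm_add_le_of_le (norm_mul_le_of_le abs_two.le hu2) hu3) hQ'))
    (norm_add_le_of_le (norm_mul_le_of_le (norm_mul_le_of_le h3 hu2) hf2)
      (norm_mul_le_of_le hu3 hf3))
  simp only [Real.norm_eq_abs] at hDU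
  rw [(hasDerivWithinAt_U2 hf huI).derivWithin (uniqueDiffOn_Iset u huI), coeffBound]
  nlinarith [mul_nonneg hκ hβ.le, mul_nonneg (abs_nonneg h) hβ.le, mul_nonneg hM hβ.le,
    mul_nonneg hκ hκ, mul_nonneg hκ (abs_nonneg h), mul_nonneg hκ hM]

end CoefficientBounds

def vBound (h M : ℝ) : ℝ := 12 * coeffBound h M + (12 * coeffBound h M) ^ 2

section CoefficientQuotients

variable {h M δ u : ℝ} {f : ℝ → ℝ}

lemma hasDerivWithinAt_U1_Uset (hf : CM M f) (hδ : δ ≤ 1 / 8) (hu : u ∈ Uset δ) :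
    HasDerivWithinAt (U1 h f) (derivWithin (U1 h f) Iset u) (Uset δ) u :=
  (((contDiffOn_U1 hf).differentiableOn one_ne_zero u (Uset_subset_Iset hδ hu)
    ).hasDerivWithinAt).mono (Uset_subset_Iset hδ)

lemma hasDerivWithinAt_U2_Uset (hf : CM M f) (hδ : δ ≤ 1 / 8) (hu : u ∈ Uset δ) :
    HasDerivWithinAt (U2 h f) (derivWithin (U2 h f) Iset u) (Uset δ) u :=
  (((contDiffOn_U2 hf).differentiableOn one_ne_zero u (Uset_subset_Iset hδ hu)
    ).hasDerivWithinAt).mono (Uset_subset_Iset hδ)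

lemma abs_div_U1_le {n : ℝ → ℝ} {n' : ℝ} (hf : CM M f) (hκ : 0 ≤ kap h) (hM : 0 ≤ M)
    (hδ0 : 0 < δ) (hδ : δ ≤ 1 / 8) (hMδ : M * δ ≤ 1 / 8) (hhδ : |h| * δ ≤ 1 / 8)
    (hu : u ∈ Uset δ) (hn : HasDerivWithinAt n n' (Uset δ) u)
    (hnu : |n u| ≤ 3 * coeffBound h M * (kap h + d2 f 1))
    (hn' : |n'| ≤ 3 * coeffBound h M * (kap h + d2 f 1)) :
    |n u / U1 h f u| ≤ vBound h M ∧
      |derivWithin (fun y => n y / U1 h f y) (Uset δ) u| ≤ vBound h M := by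
  have hσ : 0 < kap h + d2 f 1 := by linarith [hf.d2_one_pos]
  have hd : kap h + d2 f 1 ≤ 4 * U1 h f u := by linarith [le_U1 hf hκ hδ hMδ hhδ hu]
  have hd' : |derivWithin (U1 h f) Iset u| ≤ 3 * coeffBound h M * (kap h + d2 f 1) :=
    (abs_derivWithin_U1_le hf hκ hM hδ hMδ hu).trans (by nlinarith [one_le_coeffBound hκ hM])
  have hne : U1 h f u ≠ 0 := by linarith
  rw [(hn.fun_div (hasDerivWithinAt_U1_Uset hf hδ hu) hne).derivWithin
    (uniqueDiffOn_Icc (by linarith) u hu)]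
  constructor
  · exact (abs_div_le_of_le hσ (by norm_num) hd hnu).trans
      (by rw [vBound]; nlinarith [sq_nonneg (12 * coeffBound h M)])
  · exact (abs_quotient_deriv_le hσ (by norm_num) hd hnu hn' hd').trans_eq
      (by rw [vBound]; ring)

lemma abs_V1_le (hf : CM M f) (hκ : 0 ≤ kap h) (hM : 0 ≤ M) (hδ0 : 0 < δ) (hδ : δ ≤ 1 / 8)
    (hMδ : M * δ ≤ 1 / 8) (hhδ : |h| * δ ≤ 1 / 8) (hu : u ∈ Uset δ) :
    |V1 h f u| ≤ vBound h M ∧ |derivWithin (V1 h f) (Uset δ) u| ≤ vBound h M :=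
  abs_div_U1_le hf hκ hM hδ0 hδ hMδ hhδ hu
    (((hasDerivWithinAt_U1_Uset hf hδ hu).const_mul 2).sub (hasDerivWithinAt_U2_Uset hf hδ hu))
    ((norm_sub_le_of_le (E := ℝ) (norm_mul_le_of_le abs_two.le
      (abs_U1_le hf hκ hM hδ hMδ hu)) (abs_U2_le hf hκ hM hδ hMδ hu)).trans_eq (by ring))
    ((norm_sub_le_of_le (E := ℝ) (norm_mul_le_of_le abs_two.le
      (abs_derivWithin_U1_le hf hκ hM hδ hMδ hu))
      (abs_derivWithin_U2_le hf hκ hM hδ hMδ hu)).trans_eq (by ring))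

lemma abs_V2_le (hf : CM M f) (hκ : 0 ≤ kap h) (hM : 0 ≤ M) (hδ0 : 0 < δ) (hδ : δ ≤ 1 / 8)
    (hMδ : M * δ ≤ 1 / 8) (hhδ : |h| * δ ≤ 1 / 8) (hu : u ∈ Uset δ) :
    |V2 h f u| ≤ vBound h M ∧ |derivWithin (V2 h f) (Uset δ) u| ≤ vBound h M := by
  have hσ : 0 < kap h + d2 f 1 := by linarith [hf.d2_one_pos]
  have hK := one_le_coeffBound hκ hM
  obtain ⟨hu2, -⟩ := hf.abs_le_of_mem_Uset hδ hMδ hu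
  refine abs_div_U1_le hf hκ hM hδ0 hδ hMδ hhδ hu
    ((hasDerivWithinAt_id u _).const_mul (kap h + d2 f 1)) ?_ ?_
  · rw [abs_mul, abs_of_pos hσ]
    nlinarith
  · rw [mul_one, abs_of_pos hσ]
    nlinarith

end CoefficientQuotients

/-- coercivity of `U₁` and uniform C¹ bounds for `V₁, V₂` on `U(δ)`,
with a constant depending only on `h` and `M`. -/
theorem coefficients_coercivity_and_bounds
    (h M : ℝ) (hκ : 0 < kap h) (hM : 0 ≤ M) :
    ∃ C₀ : ℝ, ∀ f : ℝ → ℝ, CM M f →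
      -- (i) coercivity
      (∀ u ∈ Uset (del h M), kap h + d2 f 1 / 4 ≤ U1 h f u) ∧
      -- (ii) V₁, V₂ are well-defined C¹ functions on U(δ) with the stated values
      ContDiffOn ℝ 1 (V1 h f) (Uset (del h M)) ∧
      ContDiffOn ℝ 1 (V2 h f) (Uset (del h M)) ∧
      V1 h f 1 = 0 ∧ V2 h f 1 = 1 ∧
      (∀ u ∈ Uset (del h M), 0 < V2 h f u) ∧
      -- (iii) uniform bounds depending only on h and M
      (∀ u ∈ Uset (del h M),
        |V1 h f u| ≤ C₀ ∧ |V2 h f u| ≤ C₀ ∧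
        |derivWithin (V1 h f) (Uset (del h M)) u| ≤ C₀ ∧
        |derivWithin (V2 h f) (Uset (del h M)) u| ≤ C₀) := by
  have hδ0 := del_pos hκ hM
  have hδ := del_le_eighth (h := h) (M := M)
  have hMδ := mul_del_le (h := h) hM
  have hhδ := abs_mul_del_le (h := h) (M := M)
  have hU := Uset_subset_Iset hδ
  refine ⟨vBound h M, fun f hf => ?_⟩
  have hσ : 0 < kap h + d2 f 1 := by linarith [hf.d2_one_pos]
  have hcoer := fun u (hu : u ∈ Uset (del h M)) => le_U1 hf hκ.le hδ hMδ hhδ hu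
  have hU1 : ∀ u ∈ Uset (del h M), 0 < U1 h f u := fun u hu => by
    linarith [hcoer u hu, hf.d2_one_pos]
  have hU1C := (contDiffOn_U1 (h := h) hf).mono hU
  refine ⟨hcoer, ((contDiffOn_const.mul hU1C).sub ((contDiffOn_U2 hf).mono hU)).div hU1C
    fun u hu => (hU1 u hu).ne', (contDiffOn_const.mul contDiffOn_id).div hU1C
    fun u hu => (hU1 u hu).ne', ?_, ?_, fun u hu => ?_, fun u hu => ?_⟩
  · rw [V1, U1_one hf, U2_one hf, two_mul, sub_self, zero_div]
  · rw [V2, U1_one hf, mul_one, div_self hσ.ne']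
  · exact div_pos (mul_pos hσ (by linarith [(hU hu).1])) (hU1 u hu)
  · obtain ⟨hV1, hDV1⟩ := abs_V1_le hf hκ.le hM hδ0 hδ hMδ hhδ hu
    obtain ⟨hV2, hDV2⟩ := abs_V2_le hf hκ.le hM hδ0 hδ hMδ hhδ hu
    exact ⟨hV1, hV2, hDV1, hDV2⟩
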